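/- arXiv:1003.1727 — 4 statements merged into one kernel-verified Lean document; each statement's English description precedes it below -/
import Mathlib

section
/- Let μ be a Borel probability measure on ℝ whose cdf G(x) = μ((−∞, x]) is continuous, and let λ ≠ 0. Define the measure ν by ν(A) = ∫_A (λ/(1 − e^{−λ})) e^{−λG(x)} dμ(x) for Borel sets A. Then ν is a probability measure and ν((−∞, x]) = F_λ(G(x)) for every x ∈ ℝ; that is, the exp-G measure μ_λ is absolutely continuous with respect to μ with Radon–Nikodym derivative dμ_λ/dμ (x) = λ e^{−λG(x)}/(1 − e^{−λ}). -/
/-!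
Write `F` for the cdf of `μ`. When `F` is continuous, every sublevel set `{t | F t ≤ a}` with
`a < 1` is either empty or a half-line `Iic s` with `F s = a`, so `F` pushes `μ` forward to the
uniform distribution on `(0, 1]`, and `Iic x` agrees `μ`-a.e. with `{t | F t ≤ F x}`. Hence
`∫ g ∘ F` over `Iic x` against `μ` equals `∫ g` over `(0, F x]`, and for the density `g = F_λ'`
this is `F_λ (F x)`.
-/

open Real Set MeasureTheory ProbabilityTheory

lemma Monotone.exists_preimage_Iic_eq_Iic {α β : Type*} [ConditionallyCompleteLinearOrder α]
    [TopologicalSpace α] [OrderTopology α] [DenselyOrdered α] [NoMaxOrder α]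
    [LinearOrder β] [TopologicalSpace β] [OrderClosedTopology β]
    {f : α → β} (hmono : Monotone f) (hcont : Continuous f) {b : β}
    (hne : (f ⁻¹' Iic b).Nonempty) (hbdd : BddAbove (f ⁻¹' Iic b)) :
    ∃ a, f ⁻¹' Iic b = Iic a ∧ f a = b := by
  obtain ⟨a, ha⟩ : ∃ a, f ⁻¹' Iic b = Iic a := ⟨sSup (f ⁻¹' Iic b), by
    rw [← lowerClosure_eq_Iic_csSup hne hbdd (isClosed_Iic.preimage hcont),
      ((isLowerSet_Iic b).preimage hmono).lowerClosure]⟩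
  refine ⟨a, ha, frontier_le_subset_eq hcont continuous_const ?_⟩
  change a ∈ frontier (f ⁻¹' Iic b)
  rw [ha, frontier_Iic]
  rfl

section ContinuousCDF

variable {μ : Measure ℝ} [IsProbabilityMeasure μ]

lemma measure_cdf_preimage_Iic (hF : Continuous (cdf μ)) {a : ℝ} (ha : a < 1) :
    μ (cdf μ ⁻¹' Iic a) = ENNReal.ofReal a := by
  obtain hempty | hne := (cdf μ ⁻¹' Iic a).eq_empty_or_nonempty
  · have ha0 : a ≤ 0 := by
      by_contra! ha0
      obtain ⟨t, ht⟩ := ((tendsto_cdf_atBot μ).eventually_le_const ha0).exists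
      exact hempty.subset ht
    rw [hempty, measure_empty, ENNReal.ofReal_of_nonpos ha0]
  · have hbdd : BddAbove (cdf μ ⁻¹' Iic a) := by
      obtain ⟨t₀, ht₀⟩ := ((tendsto_cdf_atTop μ).eventually_const_lt ha).exists
      exact ⟨t₀, fun t ht => le_of_not_gt fun h => (ht₀.trans_le ((monotone_cdf μ) h.le)).not_ge ht⟩
    obtain ⟨s, hs, rfl⟩ := (monotone_cdf μ).exists_preimage_Iic_eq_Iic hF hne hbdd
    rw [hs, ofReal_cdf]

theorem map_cdf_eq_volume_restrict_Ioc (hF : Continuous (cdf μ)) :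
    μ.map (cdf μ) = volume.restrict (Ioc 0 1) := by
  refine Measure.ext_of_Iic _ _ fun a => ?_
  rw [Measure.map_apply hF.measurable measurableSet_Iic, Measure.restrict_apply measurableSet_Iic,
    inter_comm, Ioc_inter_Iic, Real.volume_Ioc, sub_zero]
  rcases lt_or_ge a 1 with ha | ha
  · rw [measure_cdf_preimage_Iic hF ha, min_eq_right ha.le]
  · rw [min_eq_left ha, ENNReal.ofReal_one, ← measure_univ (μ := μ)]
    exact congrArg μ (eq_univ_of_forall fun t => (cdf_le_one μ t).trans ha)

lemma lintegral_comp_cdf (hF : Continuous (cdf μ)) {g : ℝ → ENNReal} (hg : Measurable g) :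
    ∫⁻ t, g (cdf μ t) ∂μ = ∫⁻ u in Ioc 0 1, g u := by
  rw [← lintegral_map hg hF.measurable, map_cdf_eq_volume_restrict_Ioc hF]

lemma setLIntegral_Iic_comp_cdf (hF : Continuous (cdf μ)) {g : ℝ → ENNReal} (hg : Measurable g)
    (x : ℝ) : ∫⁻ t in Iic x, g (cdf μ t) ∂μ = ∫⁻ u in Ioc 0 (cdf μ x), g u := by
  have hmap := map_cdf_eq_volume_restrict_Ioc hF
  have hIoc : Iic (cdf μ x) ∩ Ioc 0 1 = Ioc 0 (cdf μ x) := by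
    rw [inter_comm, Ioc_inter_Iic, min_eq_right (cdf_le_one μ x)]
  have hae : Iic x =ᵐ[μ] cdf μ ⁻¹' Iic (cdf μ x) := by
    refine ae_eq_of_subset_of_measure_ge (fun t ht => monotone_cdf μ ht) (le_of_eq ?_)
      measurableSet_Iic.nullMeasurableSet (measure_ne_top _ _)
    rw [← Measure.map_apply hF.measurable measurableSet_Iic, hmap,
      Measure.restrict_apply measurableSet_Iic, hIoc, Real.volume_Ioc, sub_zero, ofReal_cdf]
  rw [setLIntegral_congr hae, ← setLIntegral_map measurableSet_Iic hg hF.measurable, hmap,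
    Measure.restrict_restrict measurableSet_Iic, hIoc]

end ContinuousCDF

noncomputable def truncExpCDF (l u : ℝ) : ℝ := (1 - exp (-(l * u))) / (1 - exp (-l))

noncomputable def truncExpPDF (l u : ℝ) : ℝ := l / (1 - exp (-l)) * exp (-(l * u))

lemma continuous_truncExpPDF (l : ℝ) : Continuous (truncExpPDF l) := by
  unfold truncExpPDF; fun_prop

lemma hasDerivAt_truncExpCDF (l u : ℝ) : HasDerivAt (truncExpCDF l) (truncExpPDF l u) u := by
  have h : HasDerivAt (fun v => -(l * v)) (-l) u := by
    simpa using ((hasDerivAt_id' u).const_mul l).fun_neg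
  refine ((h.exp.const_sub 1).div_const _).congr_deriv ?_
  rw [truncExpPDF]
  ring

lemma integral_truncExpPDF (l u : ℝ) : ∫ v in (0 : ℝ)..u, truncExpPDF l v = truncExpCDF l u := by
  rw [intervalIntegral.integral_eq_sub_of_hasDerivAt (fun v _ => hasDerivAt_truncExpCDF l v)
    ((continuous_truncExpPDF l).intervalIntegrable 0 u)]
  simp [truncExpCDF]

lemma one_sub_exp_neg_ne_zero {l : ℝ} (hl : l ≠ 0) : 1 - exp (-l) ≠ 0 :=
  sub_ne_zero.2 fun h => hl (neg_eq_zero.1 ((exp_eq_one_iff _).1 h.symm))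

lemma truncExpPDF_pos {l : ℝ} (hl : l ≠ 0) (u : ℝ) : 0 < truncExpPDF l u := by
  refine mul_pos ?_ (exp_pos _)
  rcases hl.lt_or_gt with hl | hl
  · exact div_pos_of_neg_of_neg hl (sub_neg.2 (one_lt_exp_iff.2 (neg_pos.2 hl)))
  · exact div_pos hl (sub_pos.2 (exp_lt_one_iff.2 (neg_neg_iff_pos.2 hl)))

lemma truncExpCDF_one {l : ℝ} (hl : l ≠ 0) : truncExpCDF l 1 = 1 := by
  rw [truncExpCDF, mul_one, div_self (one_sub_exp_neg_ne_zero hl)]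

lemma truncExpCDF_nonneg {l u : ℝ} (hl : l ≠ 0) (hu : 0 ≤ u) : 0 ≤ truncExpCDF l u :=
  integral_truncExpPDF l u ▸ intervalIntegral.integral_nonneg hu fun v _ => (truncExpPDF_pos hl v).le

lemma lintegral_Ioc_truncExpPDF {l u : ℝ} (hl : l ≠ 0) (hu : 0 ≤ u) :
    ∫⁻ v in Ioc 0 u, ENNReal.ofReal (truncExpPDF l v) = ENNReal.ofReal (truncExpCDF l u) := by
  rw [← integral_truncExpPDF, intervalIntegral.integral_of_le hu,
    ofReal_integral_eq_lintegral_ofReal _ (ae_of_all _ fun v => (truncExpPDF_pos hl v).le)]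
  exact (continuous_truncExpPDF l).integrableOn_Ioc

/-- If `μ` is a Borel probability measure on `ℝ` with continuous cdf `G`
and `λ ≠ 0`, then the measure `ν` with density `x ↦ (λ/(1 − e^{−λ})) e^{−λG(x)}`
with respect to `μ` is a probability measure whose cdf is `x ↦ F_λ(G(x))`;
that is, the exp-G measure `μ_λ` satisfies `dμ_λ/dμ (x) = λ e^{−λG(x)}/(1 − e^{−λ})`. -/
theorem expG_withDensity_isProbability_and_cdf
    (μ : Measure ℝ) [IsProbabilityMeasure μ]
    (G : ℝ → ℝ) (hG : ∀ x, G x = (μ (Iic x)).toReal) (hGcont : Continuous G)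
    (l : ℝ) (hl : l ≠ 0)
    (ν : Measure ℝ)
    (hν : ν = μ.withDensity
      (fun x => ENNReal.ofReal (l / (1 - Real.exp (-l)) * Real.exp (-(l * G x))))) :
    IsProbabilityMeasure ν ∧
    ∀ x : ℝ, (ν (Iic x)).toReal
      = (1 - Real.exp (-(l * G x))) / (1 - Real.exp (-l)) := by
  obtain rfl : G = cdf μ := funext fun x => by rw [hG, cdf_eq_real, measureReal_def]
  obtain rfl : ν = μ.withDensity fun x => ENNReal.ofReal (truncExpPDF l (cdf μ x)) := hν
  have hg : Measurable fun u => ENNReal.ofReal (truncExpPDF l u) :=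
    ENNReal.measurable_ofReal.comp (continuous_truncExpPDF l).measurable
  refine ⟨⟨?_⟩, fun x => ?_⟩
  · rw [withDensity_apply _ MeasurableSet.univ, Measure.restrict_univ, lintegral_comp_cdf hGcont hg,
      lintegral_Ioc_truncExpPDF hl zero_le_one, truncExpCDF_one hl, ENNReal.ofReal_one]
  · rw [withDensity_apply _ measurableSet_Iic, setLIntegral_Iic_comp_cdf hGcont hg,
      lintegral_Ioc_truncExpPDF hl (cdf_nonneg μ x),
      ENNReal.toReal_ofReal (truncExpCDF_nonneg hl (cdf_nonneg μ x)), truncExpCDF]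
end

section
/- For every λ ≠ 0 and every u ∈ [0,1], 1 − F_λ(u) = F_{−λ}(1 − u). Consequently (reciprocal property), if X is an almost surely positive random variable with cdf x ↦ F_λ(G(x)) where G is a continuous cdf, then for every x > 0, P(1/X ≤ x) = F_{−λ}(1 − G(1/x)); that is, 1/X follows the exp-S distribution with parameter −λ, where S(x) = 1 − G(1/x) is the cdf of 1/Y for Y ∼ G. -/
/-!
The identity `1 − F_λ(u) = F_{−λ}(1 − u)` is obtained by multiplying numerator and denominator
of `F_{−λ}(1 − u)` by `e^{−λ}`. For the reciprocal property, `X > 0` a.s. turns `{1/X ≤ x}` into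
`{X ≥ 1/x}`; since the cdf `F_λ ∘ G` of `X` is continuous, `X` has no atoms, so
`P(X ≥ 1/x) = 1 − F_λ(G(1/x))`, and the identity finishes the proof.
-/

open Real Set MeasureTheory ProbabilityTheory

noncomputable def truncExpCdf (l u : ℝ) : ℝ :=
  (1 - exp (-(l * u))) / (1 - exp (-l))

lemma one_sub_truncExpCdf {l : ℝ} (hl : l ≠ 0) (u : ℝ) :
    1 - truncExpCdf l u = truncExpCdf (-l) (1 - u) := by
  have hden_neg : 1 - exp l ≠ 0 := by simpa only [neg_neg] using one_sub_exp_neg_ne_zero (neg_ne_zero.2 hl)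
  have hden := one_sub_exp_neg_ne_zero hl
  have hexp : exp (-(-l * (1 - u))) = exp l * exp (-(l * u)) := by
    rw [← exp_add]; ring_nf
  have hinv : exp (-l) * exp l = 1 := by rw [← exp_add, neg_add_cancel, exp_zero]
  unfold truncExpCdf
  rw [hexp, neg_neg]
  field_simp
  linear_combination (1 - exp (-(l * u))) * hinv

lemma map_one_div_Iic_of_pos {μ : Measure ℝ} (hpos : μ (Iic 0) = 0) {x : ℝ} (hx : 0 < x) :
    μ.map (fun y => 1 / y) (Iic x) = μ (Ici (1 / x)) := by
  have hmeas : Measurable fun y : ℝ => 1 / y := by simpa only [one_div] using measurable_inv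
  rw [Measure.map_apply hmeas measurableSet_Iic]
  refine measure_congr <| Filter.eventuallyEq_set.2 ?_
  have hae : ∀ᵐ y ∂μ, 0 < y := ae_iff.2 <| by simp only [not_lt]; exact hpos
  filter_upwards [hae] with y hy using one_div_le hy hx

lemma measure_Ici_of_continuousAt_cdf {μ : Measure ℝ} [IsProbabilityMeasure μ] {a : ℝ}
    (h : ContinuousAt (cdf μ) a) : μ (Ici a) = ENNReal.ofReal (1 - cdf μ a) := by
  calc μ (Ici a) = (cdf μ).measure (Ici a) := by rw [measure_cdf]
    _ = ENNReal.ofReal (1 - cdf μ a) := by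
      rw [StieltjesFunction.measure_Ici _ (tendsto_cdf_atTop μ), h.continuousWithinAt.leftLim_eq]

/-- For `λ ≠ 0` and `u ∈ [0,1]`, `1 − F_λ(u) = F_{−λ}(1 − u)`.
Consequently (reciprocal property), if `X` is an a.s. positive random variable with law
`μ` and cdf `x ↦ F_λ(G(x))` for a continuous cdf `G`, then for every `x > 0`,
`P(1/X ≤ x) = F_{−λ}(1 − G(1/x))`; that is, `1/X` follows the exp-S distribution with
parameter `−λ`, where `S(x) = 1 − G(1/x)`. -/
theorem expG_reciprocal_property (l : ℝ) (hl : l ≠ 0) :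
    (∀ u ∈ Icc (0:ℝ) 1,
      1 - (1 - Real.exp (-(l * u))) / (1 - Real.exp (-l))
        = (1 - Real.exp (-(-l * (1 - u)))) / (1 - Real.exp (-(-l)))) ∧
    ∀ (μ : Measure ℝ), IsProbabilityMeasure μ → μ {y : ℝ | y ≤ 0} = 0 →
      ∀ G : ℝ → ℝ, Continuous G → (∀ x, G x ∈ Icc (0:ℝ) 1) → Monotone G →
      (∀ x, (μ (Iic x)).toReal = (1 - Real.exp (-(l * G x))) / (1 - Real.exp (-l))) →
      ∀ x : ℝ, 0 < x →
        ((μ.map (fun y => 1 / y)) (Iic x)).toReal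
          = (1 - Real.exp (-(-l * (1 - G (1 / x))))) / (1 - Real.exp (-(-l))) := by
  refine ⟨fun u _ => one_sub_truncExpCdf hl u, ?_⟩
  intro μ _ hpos G hG _ _ hcdf x hx
  have hcdf_eq : ⇑(cdf μ) = fun b => truncExpCdf l (G b) := by
    ext b; rw [cdf_eq_real, measureReal_def, hcdf]; rfl
  have hcont : Continuous (cdf μ) := by
    rw [hcdf_eq]; unfold truncExpCdf; fun_prop
  rw [map_one_div_Iic_of_pos hpos hx, measure_Ici_of_continuousAt_cdf hcont.continuousAt,
    ENNReal.toReal_ofReal (sub_nonneg.2 (cdf_le_one μ _)), hcdf_eq]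
  exact one_sub_truncExpCdf hl _
end

section
/- Let α > 0, β > 0, r > 0 and λ ≠ 0, and let f be the exp-Weibull density f(x) = (λ α β^{−α}/(1 − e^{−λ})) x^{α−1} exp{−λ(1 − e^{−(x/β)^α}) − (x/β)^α} for x > 0. Then the r-th moment is ∫_0^∞ x^r f(x) dx = (λ β^r Γ(r/α + 1)/(e^λ − 1)) · Σ_{k=0}^∞ λ^k/(k! (k+1)^{r/α + 1}), the series being absolutely convergent. -/
/-!
Writing `t = (x/β)^α`, the exp-Weibull density is `e^{-λ} e^{λ e^{-t}}` times a Weibull-type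
factor, and expanding `e^{λ e^{-t}}` as a power series turns `x^r f(x)` into
`Σ_k λ^k/k! · x^{r+α-1} e^{-(k+1)t}` up to a constant. Each term is a Weibull moment, i.e. a
Gamma integral equal to `β^{r+α} (k+1)^{-(r/α+1)} Γ(r/α+1)/α`, and the series of absolute values
of the coefficients is dominated by `Σ |λ|^k/k!`, so the sum and the integral may be exchanged.
-/

open Real Set MeasureTheory
open scoped Nat

theorem summable_abs_pow_div_factorial_mul_rpow (l : ℝ) {s : ℝ} (hs : 0 ≤ s) :
    Summable fun k : ℕ => |l ^ k / (k ! * ((k : ℝ) + 1) ^ s)| := by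
  refine (Real.summable_pow_div_factorial |l|).of_nonneg_of_le (fun k => abs_nonneg _)
    fun k => ?_
  have hk : (1 : ℝ) ≤ ((k : ℝ) + 1) ^ s := one_le_rpow (by linarith [k.cast_nonneg (α := ℝ)]) hs
  rw [abs_div, abs_pow, abs_mul, Nat.abs_cast, abs_of_nonneg (zero_le_one.trans hk)]
  exact div_le_div_of_nonneg_left (by positivity) (by positivity)
    (le_mul_of_one_le_right (by positivity) hk)

theorem hasSum_exp_neg_mul_one_sub_exp_neg (l t : ℝ) :
    HasSum (fun k : ℕ => exp (-l) * (l ^ k / k !) * exp (-((k + 1) * t)))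
      (exp (-(l * (1 - exp (-t))) - t)) := by
  have h := (NormedSpace.expSeries_div_hasSum_exp (l * exp (-t))).mul_left (exp (-l) * exp (-t))
  rw [← Real.exp_eq_exp_ℝ, ← Real.exp_add, ← Real.exp_add] at h
  rw [show -(l * (1 - exp (-t))) - t = -l + -t + l * exp (-t) by ring]
  refine h.congr_fun fun k => ?_
  rw [mul_pow, ← Real.exp_nat_mul, show -((k + 1) * t) = -t + k * -t by ring, Real.exp_add,
    Real.exp_add]
  ring

theorem div_one_sub_exp_neg_mul_exp_neg (a l : ℝ) :
    a / (1 - exp (-l)) * exp (-l) = a / (exp l - 1) := by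
  rw [div_mul_eq_mul_div, ← div_div_eq_mul_div, sub_div, div_self (exp_ne_zero _), one_div,
    ← Real.exp_neg, neg_neg]

section Weibull

variable {p β c r : ℝ}

theorem rpow_mul_exp_neg_mul_div_rpow_eq {x : ℝ} (hβ : 0 < β) (hx : 0 ≤ x) :
    x ^ (r + p - 1) * exp (-(c * (x / β) ^ p))
      = x ^ (r + p - 1) * exp (-(c * β ^ (-p)) * x ^ p) := by
  rw [div_rpow hx hβ.le, rpow_neg hβ.le]
  ring_nf

theorem integrableOn_rpow_mul_exp_neg_mul_div_rpow (hp : 0 < p) (hβ : 0 < β) (hc : 0 < c)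
    (hr : -p < r) :
    IntegrableOn (fun x => x ^ (r + p - 1) * exp (-(c * (x / β) ^ p))) (Ioi 0) :=
  (integrableOn_rpow_mul_exp_neg_mul_rpow (by linarith) hp
    (mul_pos hc (rpow_pos_of_pos hβ _))).congr_fun
    (fun x hx => (rpow_mul_exp_neg_mul_div_rpow_eq hβ (le_of_lt hx)).symm) measurableSet_Ioi

theorem integral_rpow_mul_exp_neg_mul_div_rpow (hp : 0 < p) (hβ : 0 < β) (hc : 0 < c)
    (hr : -p < r) :
    ∫ x in Ioi 0, x ^ (r + p - 1) * exp (-(c * (x / β) ^ p))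
      = β ^ (r + p) * c ^ (-(r / p + 1)) * Gamma (r / p + 1) / p := by
  rw [setIntegral_congr_fun measurableSet_Ioi
      fun x hx => rpow_mul_exp_neg_mul_div_rpow_eq hβ (le_of_lt hx),
    integral_rpow_mul_exp_neg_mul_rpow hp (by linarith) (mul_pos hc (rpow_pos_of_pos hβ _))]
  have hexp : (r + p - 1 + 1) / p = r / p + 1 := by field_simp; ring
  rw [neg_div, hexp, mul_rpow hc.le (rpow_pos_of_pos hβ _).le, ← rpow_mul hβ.le,
    show -p * -(r / p + 1) = r + p by field_simp]
  ring

end Weibull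

theorem hasSum_rpow_mul_expWeibull_density {l p β r x : ℝ} (hx : 0 < x) :
    HasSum (fun k : ℕ => l * p * β ^ (-p) / (exp l - 1) * (l ^ k / k !) *
        (x ^ (r + p - 1) * exp (-((k + 1) * (x / β) ^ p))))
      (x ^ r * (l * p * β ^ (-p) / (1 - exp (-l)) * x ^ (p - 1) *
        exp (-(l * (1 - exp (-(x / β) ^ p))) - (x / β) ^ p))) := by
  rw [← mul_assoc]
  refine ((hasSum_exp_neg_mul_one_sub_exp_neg l ((x / β) ^ p)).mul_left _).congr_fun fun k => ?_
  rw [← div_one_sub_exp_neg_mul_exp_neg, add_sub_assoc, rpow_add hx]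
  ring

theorem integral_tsum_mul_of_nonneg {X : Type*} [MeasurableSpace X] {μ : Measure X}
    {a : ℕ → ℝ} {g : ℕ → X → ℝ} (hg : ∀ k, 0 ≤ᵐ[μ] g k) (hint : ∀ k, Integrable (g k) μ)
    (hsum : Summable fun k => |a k| * ∫ x, g k x ∂μ) :
    ∫ x, ∑' k, a k * g k x ∂μ = ∑' k, a k * ∫ x, g k x ∂μ := by
  have hnorm : ∀ k, ∫ x, ‖a k * g k x‖ ∂μ = |a k| * ∫ x, g k x ∂μ := fun k => by
    rw [← integral_const_mul]
    refine integral_congr_ae ((hg k).mono fun x hx => ?_)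
    simp only [norm_mul, Real.norm_eq_abs, abs_of_nonneg hx]
  rw [← integral_tsum_of_summable_integral_norm (fun k => (hint k).const_mul (a k))
    (by simpa only [hnorm] using hsum)]
  simp_rw [integral_const_mul]

theorem expWeibull_moment_general (α β r l : ℝ) (hα : 0 < α) (hβ : 0 < β) (hr : 0 < r)
    (f : ℝ → ℝ)
    (hf : ∀ x, f x = l * α * β ^ (-α) / (1 - Real.exp (-l)) * x ^ (α - 1) *
      Real.exp (-(l * (1 - Real.exp (-(x / β) ^ α))) - (x / β) ^ α)) :
    Summable (fun k : ℕ =>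
      |l ^ k / ((Nat.factorial k : ℝ) * ((k : ℝ) + 1) ^ (r / α + 1))|) ∧
    ∫ x in Ioi (0:ℝ), x ^ r * f x
      = l * β ^ r * Real.Gamma (r / α + 1) / (Real.exp l - 1) *
        ∑' k : ℕ, l ^ k / ((Nat.factorial k : ℝ) * ((k : ℝ) + 1) ^ (r / α + 1)) := by
  have hrα : -α < r := by linarith
  have hsum := summable_abs_pow_div_factorial_mul_rpow l (by positivity : 0 ≤ r / α + 1)
  refine ⟨hsum, ?_⟩
  set g : ℕ → ℝ → ℝ := fun k x => x ^ (r + α - 1) * exp (-((k + 1) * (x / β) ^ α))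
  set a : ℕ → ℝ := fun k => l * α * β ^ (-α) / (exp l - 1) * (l ^ k / k !)
  have hg : ∀ k, ∀ x ∈ Ioi (0 : ℝ), 0 ≤ g k x := fun k x hx =>
    mul_nonneg (rpow_nonneg (le_of_lt hx) _) (exp_pos _).le
  have hterm : ∀ k : ℕ, a k * ∫ x in Ioi 0, g k x = l * β ^ r * Gamma (r / α + 1) /
      (exp l - 1) * (l ^ k / (k ! * ((k : ℝ) + 1) ^ (r / α + 1))) := fun k => by
    simp only [a, g]
    rw [integral_rpow_mul_exp_neg_mul_div_rpow hα hβ (by positivity) hrα, rpow_neg hβ.le,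
      rpow_neg (by positivity), rpow_add hβ]
    field_simp
  have hnorm : ∀ k : ℕ, |a k| * ∫ x in Ioi 0, g k x = |l * β ^ r * Gamma (r / α + 1) /
      (exp l - 1)| * |l ^ k / (k ! * ((k : ℝ) + 1) ^ (r / α + 1))| := fun k => by
    rw [← abs_of_nonneg (setIntegral_nonneg measurableSet_Ioi fun x hx => hg k x hx), ← abs_mul,
      hterm, abs_mul]
  calc ∫ x in Ioi 0, x ^ r * f x = ∫ x in Ioi 0, ∑' k, a k * g k x :=
        setIntegral_congr_fun measurableSet_Ioi fun x hx => by
          rw [hf, (hasSum_rpow_mul_expWeibull_density hx).tsum_eq]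
    _ = ∑' k, a k * ∫ x in Ioi 0, g k x :=
        integral_tsum_mul_of_nonneg
          (fun k => (ae_restrict_mem measurableSet_Ioi).mono (hg k))
          (fun k => integrableOn_rpow_mul_exp_neg_mul_div_rpow hα hβ (by positivity) hrα)
          (by simpa only [hnorm] using hsum.mul_left _)
    _ = _ := by rw [tsum_congr hterm, tsum_mul_left]

/-- The `r`-th moment of the exp-Weibull distribution:
`∫_0^∞ x^r f(x) dx = (λ β^r Γ(r/α + 1)/(e^λ − 1)) Σ_{k≥0} λ^k/(k! (k+1)^{r/α+1})`,
the series being absolutely convergent. -/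
theorem expWeibull_moment (α β r l : ℝ) (hα : 0 < α) (hβ : 0 < β) (hr : 0 < r)
    (hl : l ≠ 0)
    (f : ℝ → ℝ)
    (hf : ∀ x, f x = l * α * β ^ (-α) / (1 - Real.exp (-l)) * x ^ (α - 1) *
      Real.exp (-(l * (1 - Real.exp (-(x / β) ^ α))) - (x / β) ^ α)) :
    Summable (fun k : ℕ =>
      |l ^ k / ((Nat.factorial k : ℝ) * ((k : ℝ) + 1) ^ (r / α + 1))|) ∧
    ∫ x in Ioi (0:ℝ), x ^ r * f x
      = l * β ^ r * Real.Gamma (r / α + 1) / (Real.exp l - 1) *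
        ∑' k : ℕ, l ^ k / ((Nat.factorial k : ℝ) * ((k : ℝ) + 1) ^ (r / α + 1)) :=
  expWeibull_moment_general α β r l hα hβ hr f hf
end

section
/- Let n ≥ 1 and 1 ≤ i ≤ n be integers and λ ≠ 0. Then for every t ∈ [0,1], λ e^{−λt} (1 − e^{−λt})^{i−1} (e^{−λt} − e^{−λ})^{n−i} = Σ_{j=0}^{i−1} Σ_{k=0}^{n−i} (−1)^{n+j−k−i} C(i−1, j) C(n−i, k) e^{−λ(n−k−i)} · λ e^{−λ(j+k+1)t}. Consequently, substituting t = G(x;θ), the density of the i-th order statistic of a sample of size n from an exp-G(λ, θ) distribution is a finite linear combination, with coefficients (−1)^{n+j−k−i} C(i−1,j) C(n−i,k) e^{−λ(n−k−i)} (1 − e^{−λ(j+k+1)})/((j+k+1) B(i, n−i+1) (1 − e^{−λ})^n), of exp-G densities with parameters (λ(j+k+1), θ). -/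
open Real Set Finset

/-!
With `a = e^{-λt}` and `c = e^{-λ}`, the identity is the product of the binomial expansions of
`(1 - a)^{i-1}` and `(a - c)^{n-i}`. For the density, `F = (1 - a)/(1 - c)` and `1 - F = (a - c)/(1 - c)`
at `t = G(x)`, so the order-statistic density is that same expression times `g(x)/((1 - c)^n B)`;
each resulting term `λ e^{-λ m G(x)} g(x)` is `(1 - e^{-λm})/m` times the exp-G density with parameter `λm`.
-/

theorem one_sub_pow_mul_sub_pow_eq_sum {R : Type*} [CommRing R] (m p : ℕ) (a c : R) :
    (1 - a) ^ m * (a - c) ^ p =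
      ∑ j ∈ range (m + 1), ∑ k ∈ range (p + 1),
        (-1) ^ (j + (p - k)) * (m.choose j : R) * (p.choose k : R) * c ^ (p - k) * a ^ (j + k) := by
  rw [sub_eq_neg_add 1 a, add_pow, sub_eq_add_neg a c, add_pow, sum_mul_sum]
  refine sum_congr rfl fun j _ => sum_congr rfl fun k _ => ?_
  rw [neg_pow a, neg_pow c, pow_add (-1 : R), pow_add a]
  ring

theorem one_sub_exp_neg_ne_zero_s19 {x : ℝ} (hx : x ≠ 0) : 1 - exp (-x) ≠ 0 := by
  rw [sub_ne_zero, ne_comm, Ne, exp_eq_one_iff, neg_eq_zero]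
  exact hx

theorem expG_kernel_expansion {n i : ℕ} (hi : 1 ≤ i) (hin : i ≤ n) (l t : ℝ) :
    l * exp (-(l * t)) * (1 - exp (-(l * t))) ^ (i - 1) * (exp (-(l * t)) - exp (-l)) ^ (n - i)
      = ∑ j ∈ range i, ∑ k ∈ range (n - i + 1),
          (-1 : ℝ) ^ (n + j - k - i) * (Nat.choose (i - 1) j : ℝ) *
            (Nat.choose (n - i) k : ℝ) * exp (-(l * ((n : ℝ) - k - i))) *
            (l * exp (-(l * ((j : ℝ) + k + 1) * t))) := by
  rw [mul_assoc, one_sub_pow_mul_sub_pow_eq_sum, Nat.sub_add_cancel hi, mul_sum]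
  refine sum_congr rfl fun j _ => ?_
  rw [mul_sum]
  refine sum_congr rfl fun k hkmem => ?_
  have hk : i + k ≤ n := by rw [Finset.mem_range] at hkmem; omega
  have hsign : n + j - k - i = j + (n - i - k) := by omega
  have hc : exp (-(l * ((n : ℝ) - k - i))) = exp (-l) ^ (n - i - k) := by
    rw [← exp_nat_mul, Nat.cast_sub (by omega), Nat.cast_sub hin]
    ring_nf
  have ha : exp (-(l * ((j : ℝ) + k + 1) * t)) = exp (-(l * t)) ^ (j + k) * exp (-(l * t)) := by
    rw [← pow_succ, ← exp_nat_mul]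
    push_cast
    ring_nf
  rw [hsign, hc, ha]
  ring

theorem orderStatistic_density_eq {K : Type*} [Field K] {c : K} (hc : 1 - c ≠ 0) (m p : ℕ)
    (l g a : K) :
    l / (1 - c) * g * a * ((1 - a) / (1 - c)) ^ m * (1 - (1 - a) / (1 - c)) ^ p
      = l * a * (1 - a) ^ m * (a - c) ^ p * g / (1 - c) ^ (m + p + 1) := by
  have hF : 1 - (1 - a) / (1 - c) = (a - c) / (1 - c) := by field_simp; ring
  rw [hF, div_pow, div_pow, pow_succ, pow_add]
  field_simp

/-- For integers `1 ≤ i ≤ n` and `λ ≠ 0`, the algebraic identity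
`λ e^{−λt}(1 − e^{−λt})^{i−1}(e^{−λt} − e^{−λ})^{n−i}
  = Σ_{j<i} Σ_{k≤n−i} (−1)^{n+j−k−i} C(i−1,j) C(n−i,k) e^{−λ(n−k−i)} λ e^{−λ(j+k+1)t}`
holds for all `t ∈ [0,1]`; consequently (substituting `t = G(x)`), the density of the
`i`-th order statistic of a sample of size `n` from an exp-G(λ) distribution is the
corresponding finite linear combination of exp-G densities with parameters `λ(j+k+1)`. -/
theorem expG_orderStatistic_expansion (n i : ℕ) (hi : 1 ≤ i) (hin : i ≤ n)
    (l : ℝ) (hl : l ≠ 0) :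
    (∀ t ∈ Icc (0:ℝ) 1,
      l * Real.exp (-(l * t)) * (1 - Real.exp (-(l * t))) ^ (i - 1) *
          (Real.exp (-(l * t)) - Real.exp (-l)) ^ (n - i)
        = ∑ j ∈ Finset.range i, ∑ k ∈ Finset.range (n - i + 1),
            (-1 : ℝ) ^ (n + j - k - i) * (Nat.choose (i - 1) j : ℝ) *
              (Nat.choose (n - i) k : ℝ) * Real.exp (-(l * ((n : ℝ) - k - i))) *
              (l * Real.exp (-(l * ((j : ℝ) + k + 1) * t)))) ∧
    (∀ g G : ℝ → ℝ, (∀ x, G x ∈ Icc (0:ℝ) 1) →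
      ∀ x : ℝ,
        (l / (1 - Real.exp (-l)) * g x * Real.exp (-(l * G x))) *
            ((1 - Real.exp (-(l * G x))) / (1 - Real.exp (-l))) ^ (i - 1) *
            (1 - (1 - Real.exp (-(l * G x))) / (1 - Real.exp (-l))) ^ (n - i) /
            ((Nat.factorial (i - 1) : ℝ) * (Nat.factorial (n - i) : ℝ) /
              (Nat.factorial n : ℝ))
          = ∑ j ∈ Finset.range i, ∑ k ∈ Finset.range (n - i + 1),
              (-1 : ℝ) ^ (n + j - k - i) * (Nat.choose (i - 1) j : ℝ) *
                (Nat.choose (n - i) k : ℝ) * Real.exp (-(l * ((n : ℝ) - k - i))) *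
                (1 - Real.exp (-(l * ((j : ℝ) + k + 1)))) /
                (((j : ℝ) + k + 1) *
                  ((Nat.factorial (i - 1) : ℝ) * (Nat.factorial (n - i) : ℝ) /
                    (Nat.factorial n : ℝ)) *
                  (1 - Real.exp (-l)) ^ n) *
                (l * ((j : ℝ) + k + 1) / (1 - Real.exp (-(l * ((j : ℝ) + k + 1)))) *
                  g x * Real.exp (-(l * ((j : ℝ) + k + 1) * G x)))) := by
  refine ⟨fun t _ => expG_kernel_expansion hi hin l t, fun g G _ x => ?_⟩
  have hn : i - 1 + (n - i) + 1 = n := by omega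
  rw [orderStatistic_density_eq (one_sub_exp_neg_ne_zero_s19 hl), hn,
    expG_kernel_expansion hi hin l (G x), sum_mul, sum_div, sum_div]
  refine sum_congr rfl fun j _ => ?_
  rw [sum_mul, sum_div, sum_div]
  refine sum_congr rfl fun k _ => ?_
  have hjk : (j : ℝ) + k + 1 ≠ 0 := by positivity
  have hexp := one_sub_exp_neg_ne_zero_s19 (mul_ne_zero hl hjk)
  have hb := one_sub_exp_neg_ne_zero_s19 hl
  field_simp
end
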